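/- arXiv:1805.09443 — 3 statements merged into one kernel-verified Lean document; each statement's English description precedes it below -/
import Mathlib

section
/- Let θ be an ℝ^d-valued random variable whose law has a density bounded by some constant B with respect to Lebesgue measure, let x ∈ ℝ^d be fixed, and let τ > 0. Then for every 0 < a < d there is a constant K = K(a,d,B) independent of x and τ such that E[|x + τ^{-1/d} θ|^{-a}] ≤ K τ^{a/d}. -/
/-!
Since the law of `θ` has density at most `B`, the event `|x + τ^{-1/d} θ|^{-a} > t` forces `θ`
into a ball of radius `τ^{1/d} t^{-1/a}`, whose probability is at most `B V τ t^{-d/a}` with `V`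
the volume of the unit ball. The layer cake formula then bounds the expectation by
`∫₀^∞ min(1, B V τ t^{-d/a}) dt`, which is finite because `d / a > 1` and, after splitting at
`t = (B V τ)^{a/d}`, equals a constant times `τ^{a/d}`.
-/

open MeasureTheory Metric Set Module
open scoped ENNReal

theorem lintegral_Ioi_ofReal_rpow_of_lt_neg_one {p c : ℝ} (hp : p < -1) (hc : 0 < c) :
    ∫⁻ t in Ioi c, ENNReal.ofReal (t ^ p) = ENNReal.ofReal (-c ^ (p + 1) / (p + 1)) := by
  rw [← integral_Ioi_rpow_of_lt hp hc, ofReal_integral_eq_lintegral_ofReal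
    (integrableOn_Ioi_rpow_of_lt hp hc)]
  filter_upwards [self_mem_ae_restrict measurableSet_Ioi] with t ht
  exact Real.rpow_nonneg (hc.trans ht).le _

theorem lintegral_ofReal_le_of_meas_lt_le_rpow_neg {Ω : Type*} [MeasurableSpace Ω]
    (μ : Measure Ω) [IsProbabilityMeasure μ] {f : Ω → ℝ} (hf_nonneg : 0 ≤ᵐ[μ] f)
    (hf : AEMeasurable f μ) {p D : ℝ} (hp : 1 < p) (hD : 0 < D)
    (htail : ∀ t > 0, μ {ω | t < f ω} ≤ ENNReal.ofReal (D * t ^ (-p))) :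
    ∫⁻ ω, ENNReal.ofReal (f ω) ∂μ ≤ ENNReal.ofReal (p / (p - 1) * D ^ p⁻¹) := by
  set t₀ := D ^ p⁻¹
  have ht₀ : 0 < t₀ := Real.rpow_pos_of_pos hD _
  have hp₀ : p - 1 ≠ 0 := by linarith
  -- `t₀` balances the two bounds: `t₀ ^ p = D`
  have hDt₀ : D * t₀ ^ (-p + 1) = t₀ := by
    rw [Real.rpow_add ht₀, Real.rpow_one, Real.rpow_neg ht₀.le, ← Real.rpow_mul hD.le,
      inv_mul_cancel₀ (by linarith), Real.rpow_one, mul_inv_cancel_left₀ hD.ne']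
  calc ∫⁻ ω, ENNReal.ofReal (f ω) ∂μ = ∫⁻ t in Ioi 0, μ {ω | t < f ω} :=
        lintegral_eq_lintegral_meas_lt μ hf_nonneg hf
    _ = (∫⁻ t in Ioc 0 t₀, μ {ω | t < f ω}) +
          ∫⁻ t in Ioi t₀, μ {ω | t < f ω} := by
        rw [← Ioc_union_Ioi_eq_Ioi ht₀.le,
          lintegral_union measurableSet_Ioi Ioc_disjoint_Ioi_same]
    _ ≤ (∫⁻ _ in Ioc 0 t₀, 1) +
          ∫⁻ t in Ioi t₀, ENNReal.ofReal D * ENNReal.ofReal (t ^ (-p)) := by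
        refine add_le_add (lintegral_mono fun _ ↦ prob_le_one)
          (setLIntegral_mono' measurableSet_Ioi fun t ht ↦ ?_)
        rw [← ENNReal.ofReal_mul hD.le]
        exact htail t (ht₀.trans ht)
    _ = ENNReal.ofReal t₀ + ENNReal.ofReal (D * (t₀ ^ (-p + 1) / (p - 1))) := by
        rw [setLIntegral_one, Real.volume_Ioc, sub_zero,
          lintegral_const_mul' _ _ ENNReal.ofReal_ne_top,
          lintegral_Ioi_ofReal_rpow_of_lt_neg_one (by linarith) ht₀, ENNReal.ofReal_mul hD.le]
        congr 3
        rw [neg_div, ← div_neg]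
        ring_nf
    _ = ENNReal.ofReal (p / (p - 1) * t₀) := by
        rw [← mul_div_assoc, hDt₀, ← ENNReal.ofReal_add ht₀.le (by positivity)]
        congr 1
        field_simp
        ring

theorem measure_preimage_le_of_map_eq_withDensity {Ω E : Type*} [MeasurableSpace Ω]
    [MeasurableSpace E] {P : Measure Ω} {μ : Measure E} {X : Ω → E} {g : E → ℝ≥0∞}
    {C : ℝ≥0∞} (hX : Measurable X) (hlaw : P.map X = μ.withDensity g) (hg : ∀ y, g y ≤ C)
    {s : Set E} (hs : MeasurableSet s) : P (X ⁻¹' s) ≤ C * μ s := by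
  rw [← Measure.map_apply hX hs, hlaw, withDensity_apply _ hs, ← setLIntegral_const]
  exact setLIntegral_mono measurable_const fun y _ ↦ hg y

theorem Real.lt_rpow_inv_of_lt_rpow_neg {r t a : ℝ} (hr : 0 ≤ r) (ht : 0 < t) (ha : 0 < a)
    (h : t < r ^ (-a)) : r < t ^ (-a)⁻¹ := by
  rcases hr.eq_or_lt with rfl | hr
  · rw [Real.zero_rpow (by linarith)] at h
    linarith
  · exact (Real.lt_rpow_inv_iff_of_neg hr ht (by linarith)).mpr h

theorem measureReal_ball_pos {E : Type*} [PseudoMetricSpace E] [ProperSpace E]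
    [MeasurableSpace E] (μ : Measure E) [μ.IsOpenPosMeasure] [IsFiniteMeasureOnCompacts μ]
    (x : E) {r : ℝ} (hr : 0 < r) : 0 < μ.real (ball x r) :=
  ENNReal.toReal_pos (measure_ball_pos μ x hr).ne' measure_ball_lt_top.ne

section AddHaar

variable {E : Type*} [NormedAddCommGroup E] [NormedSpace ℝ E] [FiniteDimensional ℝ E]
  [MeasurableSpace E] [BorelSpace E] (μ : Measure E) [μ.IsAddHaarMeasure]
  {Ω : Type*} [MeasurableSpace Ω] {P : Measure Ω} {X : Ω → E} {g : E → ℝ≥0∞} {B : ℝ}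

theorem measure_lt_norm_add_smul_rpow_neg_le (hX : Measurable X)
    (hlaw : P.map X = μ.withDensity g) (hg : ∀ y, g y ≤ ENNReal.ofReal B) (x : E)
    {c a t : ℝ} (hc : 0 < c) (ha : 0 < a) (ht : 0 < t) :
    P {ω | t < ‖x + c • X ω‖ ^ (-a)} ≤
      ENNReal.ofReal (B * μ.real (ball 0 1) / c ^ finrank ℝ E * t ^ (-(finrank ℝ E / a))) := by
  set r := t ^ (-a)⁻¹ / c
  have hr : 0 < r := div_pos (Real.rpow_pos_of_pos ht _) hc
  have hsub : {ω | t < ‖x + c • X ω‖ ^ (-a)} ⊆ X ⁻¹' ball (-(c⁻¹ • x)) r := by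
    intro ω hω
    have hnorm : ‖x + c • X ω‖ = c * dist (X ω) (-(c⁻¹ • x)) := by
      rw [dist_eq_norm, sub_neg_eq_add, ← norm_smul_of_nonneg hc.le, smul_add,
        smul_inv_smul₀ hc.ne', add_comm]
    have hlt := Real.lt_rpow_inv_of_lt_rpow_neg (norm_nonneg _) ht ha hω
    rw [hnorm] at hlt
    exact (lt_div_iff₀' hc).mpr hlt
  have hrn : r ^ finrank ℝ E = t ^ (-(finrank ℝ E / a)) / c ^ finrank ℝ E := by
    rw [div_pow, ← Real.rpow_natCast (t ^ _), ← Real.rpow_mul ht.le, inv_neg, neg_mul,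
      inv_mul_eq_div]
  calc P {ω | t < ‖x + c • X ω‖ ^ (-a)}
        ≤ P (X ⁻¹' ball (-(c⁻¹ • x)) r) := measure_mono hsub
    _ ≤ ENNReal.ofReal B * μ (ball (-(c⁻¹ • x)) r) :=
        measure_preimage_le_of_map_eq_withDensity hX hlaw hg measurableSet_ball
    _ = _ := by
        rw [μ.addHaar_ball_of_pos _ hr, ← ofReal_measureReal measure_ball_lt_top.ne,
          ← ENNReal.ofReal_mul (by positivity), ← ENNReal.ofReal_mul' (by positivity), hrn]
        ring_nf

theorem lintegral_norm_add_smul_rpow_neg_le [IsProbabilityMeasure P] (hX : Measurable X)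
    (hlaw : P.map X = μ.withDensity g) (hg : ∀ y, g y ≤ ENNReal.ofReal B) (hB : 0 < B) (x : E)
    {c a : ℝ} (hc : 0 < c) (ha : 0 < a) (han : a < finrank ℝ E) :
    ∫⁻ ω, ENNReal.ofReal (‖x + c • X ω‖ ^ (-a)) ∂P ≤
      ENNReal.ofReal (finrank ℝ E / (finrank ℝ E - a) *
        (B * μ.real (ball 0 1)) ^ (a / finrank ℝ E) / c ^ a) := by
  set n : ℝ := (finrank ℝ E : ℝ)
  have hn : 0 < n := ha.trans han
  have hV := measureReal_ball_pos μ 0 one_pos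
  have hp : 1 < n / a := (one_lt_div ha).mpr han
  have hD : 0 < B * μ.real (ball 0 1) / c ^ finrank ℝ E := by positivity
  convert lintegral_ofReal_le_of_meas_lt_le_rpow_neg P (.of_forall fun ω ↦ by positivity)
    (by fun_prop) hp hD fun t ht ↦ measure_lt_norm_add_smul_rpow_neg_le μ hX hlaw hg x hc ha ht
    using 2
  rw [inv_div, Real.div_rpow (by positivity) (by positivity), ← Real.rpow_natCast,
    ← Real.rpow_mul hc.le, mul_div_cancel₀ _ hn.ne']
  field_simp

end AddHaar

theorem displacement_energy_bound_general (d : ℕ)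
    {Ω : Type*} [MeasurableSpace Ω] (P : Measure Ω) [IsProbabilityMeasure P]
    (θ : Ω → EuclideanSpace ℝ (Fin d)) (hθ_meas : Measurable θ)
    (B : ℝ) (hB : 0 < B)
    (g : EuclideanSpace ℝ (Fin d) → ℝ≥0∞)
    (hg_bound : ∀ y, g y ≤ ENNReal.ofReal B)
    (hθ_law : Measure.map θ P = volume.withDensity g)
    (a : ℝ) (ha : 0 < a) (had : a < d) :
    ∃ K : ℝ, 0 < K ∧ ∀ (x : EuclideanSpace ℝ (Fin d)) (τ : ℝ), 0 < τ →
      ∫⁻ ω, ENNReal.ofReal (‖x + τ ^ (-(1 : ℝ) / d) • θ ω‖ ^ (-a)) ∂P ≤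
        ENNReal.ofReal (K * τ ^ (a / d)) := by
  have hV := measureReal_ball_pos (volume : Measure (EuclideanSpace ℝ (Fin d))) 0 one_pos
  refine ⟨d / (d - a) * (B * volume.real (ball (0 : EuclideanSpace ℝ (Fin d)) 1)) ^ (a / d),
    mul_pos (div_pos (ha.trans had) (sub_pos.mpr had)) (by positivity), fun x τ hτ ↦ ?_⟩
  have hbound := lintegral_norm_add_smul_rpow_neg_le volume hθ_meas hθ_law hg_bound hB x
    (Real.rpow_pos_of_pos hτ (-(1 : ℝ) / d)) ha (by rwa [finrank_euclideanSpace_fin])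
  rw [finrank_euclideanSpace_fin] at hbound
  refine hbound.trans_eq (congrArg ENNReal.ofReal ?_)
  rw [← Real.rpow_mul hτ.le, div_eq_mul_inv _ (τ ^ _), ← Real.rpow_neg hτ.le]
  ring_nf

/-- If `θ` is an `ℝ^d`-valued random variable whose law has a density bounded
by `B` with respect to Lebesgue measure, then for every `0 < a < d` there is a
constant `K = K(a,d,B)`, independent of `x` and `τ`, such that
`E[|x + τ^{-1/d} θ|^{-a}] ≤ K τ^{a/d}` for all `x ∈ ℝ^d` and `τ > 0`. -/
theorem displacement_energy_bound (d : ℕ) (hd : 1 ≤ d)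
    {Ω : Type*} [MeasurableSpace Ω] (P : Measure Ω) [IsProbabilityMeasure P]
    (θ : Ω → EuclideanSpace ℝ (Fin d)) (hθ_meas : Measurable θ)
    (B : ℝ) (hB : 0 < B)
    (g : EuclideanSpace ℝ (Fin d) → ℝ≥0∞) (hg_meas : Measurable g)
    (hg_bound : ∀ y, g y ≤ ENNReal.ofReal B)
    (hθ_law : Measure.map θ P = volume.withDensity g)
    (a : ℝ) (ha : 0 < a) (had : a < d) :
    ∃ K : ℝ, 0 < K ∧ ∀ (x : EuclideanSpace ℝ (Fin d)) (τ : ℝ), 0 < τ →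
      ∫⁻ ω, ENNReal.ofReal (‖x + τ ^ (-(1 : ℝ) / d) • θ ω‖ ^ (-a)) ∂P ≤
        ENNReal.ofReal (K * τ ^ (a / d)) :=
  displacement_energy_bound_general d P θ hθ_meas B hB g hg_bound hθ_law a ha had
end

section
/- Let G_n(x) denote the expected number of vertices at depth n of the PWIT whose value is at most x. Then G_n(x) = x^n/n! for all x ≥ 0 and n ≥ 1. -/
open MeasureTheory ProbabilityTheory
open scoped ENNReal

namespace PWITAux
set_option linter.unusedSectionVars false


/-- `c x j = x^j e^{-x} / j!` as an extended nonneg real. -/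
noncomputable def c (x : ℝ) (j : ℕ) : ℝ≥0∞ := ENNReal.ofReal (x ^ j * Real.exp (-x) / j.factorial)

lemma c_tsum (x : ℝ) (hx : 0 ≤ x) : ∑' j, c x j = 1 := by
  have hsummable : Summable (fun j : ℕ => x ^ j * Real.exp (-x) / j.factorial) := by
    simpa [div_eq_mul_inv, mul_comm, mul_assoc, mul_left_comm] using
      (Real.summable_pow_div_factorial x).mul_right (Real.exp (-x))
  have hnonneg : ∀ j : ℕ, 0 ≤ x ^ j * Real.exp (-x) / j.factorial := fun j => by positivity
  have h1 : ∑' j, c x j = ENNReal.ofReal (∑' j : ℕ, x ^ j * Real.exp (-x) / j.factorial) :=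
    (ENNReal.ofReal_tsum_of_nonneg hnonneg hsummable).symm
  have h2 : ∑' j : ℕ, x ^ j * Real.exp (-x) / (j.factorial : ℝ) = 1 := by
    have : ∀ j : ℕ, x ^ j * Real.exp (-x) / (j.factorial : ℝ)
        = (x ^ j / j.factorial) * Real.exp (-x) := fun j => by ring
    rw [tsum_congr this, tsum_mul_right]
    have hexp : ∑' j : ℕ, x ^ j / (j.factorial : ℝ) = Real.exp x := by
      rw [Real.exp_eq_exp_ℝ, NormedSpace.exp_eq_tsum_div]
    rw [hexp, ← Real.exp_add]
    simp
  rw [h1, h2, ENNReal.ofReal_one]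

lemma hockey (n : ℕ) : ∀ t : ℕ, ∑ s ∈ Finset.range (t + 1), ((s + n).choose n) = (t + n + 1).choose (n + 1) := by
  intro t
  induction t with
  | zero => simp
  | succ t ih =>
      rw [Finset.sum_range_succ, ih]
      have : (t + 1 + n + 1) = (t + n + 1) + 1 := by ring
      rw [this, Nat.choose_succ_succ' (t + n + 1) n]
      ring_nf

/-- cons equivalence for length-indexed lists -/
def consEquiv (n : ℕ) : ℕ × {l : List ℕ // l.length = n} ≃ {l : List ℕ // l.length = n + 1} where
  toFun p := ⟨p.1 :: p.2.1, by simp [p.2.2]⟩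
  invFun v :=
    match v with
    | ⟨[], h⟩ => absurd h (by simp)
    | ⟨j :: w, h⟩ => (j, ⟨w, by simpa using h⟩)
  left_inv := by rintro ⟨j, w, hw⟩; rfl
  right_inv := by
    rintro ⟨l, hl⟩
    match l, hl with
    | [], hl => simp at hl
    | j :: w, hl => rfl

@[simp] lemma consEquiv_coe (n : ℕ) (j : ℕ) (w : {l : List ℕ // l.length = n}) :
    ((consEquiv n (j, w) : {l : List ℕ // l.length = n + 1}) : List ℕ) = j :: w.1 := rfl

instance uniqueLen0 : Unique {l : List ℕ // l.length = 0} where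
  default := ⟨[], rfl⟩
  uniq := by rintro ⟨l, hl⟩; simp [List.length_eq_zero_iff] at hl; simp [hl]

lemma tsum_len_zero (f : {l : List ℕ // l.length = 0} → ℝ≥0∞) :
    ∑' v, f v = f ⟨[], rfl⟩ := by
  rw [tsum_eq_single (⟨[], rfl⟩ : {l : List ℕ // l.length = 0})]
  intro b hb
  exact absurd (Subsingleton.elim b _) hb

lemma tsum_len_succ (n : ℕ) (f : {l : List ℕ // l.length = n + 1} → ℝ≥0∞) :
    ∑' v, f v = ∑' (j : ℕ) (w : {l : List ℕ // l.length = n}), f (consEquiv n (j, w)) := by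
  rw [← (consEquiv n).tsum_eq f]
  exact ENNReal.tsum_prod (f := fun j w => f (consEquiv n (j, w)))

/-- regrouping a double sum over ℕ × ℕ along the antidiagonal -/
lemma tsum_prod_nat (F : ℕ → ℕ → ℝ≥0∞) :
    ∑' (j : ℕ) (s : ℕ), F j s = ∑' t : ℕ, ∑ p ∈ Finset.HasAntidiagonal.antidiagonal t, F p.1 p.2 := by
  rw [← ENNReal.tsum_prod]
  rw [← (Equiv.sigmaFiberEquiv (fun p : ℕ × ℕ => p.1 + p.2)).tsum_eq]
  rw [ENNReal.tsum_sigma']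
  refine tsum_congr fun t => ?_
  calc ∑' (b : {p : ℕ × ℕ // p.1 + p.2 = t}), F b.1.1 b.1.2
      = ∑' (b : {p : ℕ × ℕ // p ∈ Finset.HasAntidiagonal.antidiagonal t}), F b.1.1 b.1.2 :=
        (Equiv.subtypeEquivRight (fun p => Finset.HasAntidiagonal.mem_antidiagonal.symm)).tsum_eq
          (fun b : {p : ℕ × ℕ // p ∈ Finset.HasAntidiagonal.antidiagonal t} => F b.1.1 b.1.2)
    _ = ∑ p ∈ Finset.HasAntidiagonal.antidiagonal t, F p.1 p.2 := Finset.tsum_subtype (Finset.HasAntidiagonal.antidiagonal t) (fun p => F p.1 p.2)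

/-- Master combinatorial identity: summing `h` of the list-sum over lists of
length `n+1` counts each `s` with multiplicity `C(s+n, n)`. -/
lemma tsum_list (h : ℕ → ℝ≥0∞) : ∀ n : ℕ,
    ∑' v : {l : List ℕ // l.length = n + 1}, h v.1.sum
      = ∑' s : ℕ, ((s + n).choose n) * h s := by
  intro n
  induction n generalizing h with
  | zero =>
      rw [tsum_len_succ 0]
      simp only [consEquiv_coe, List.sum_cons]
      calc ∑' (j : ℕ) (w : {l : List ℕ // l.length = 0}), h (j + w.1.sum)
          = ∑' j : ℕ, h (j + 0) := by
            refine tsum_congr fun j => ?_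
            rw [tsum_len_zero (fun w => h (j + w.1.sum))]
            simp
        _ = ∑' s : ℕ, ((s + 0).choose 0) * h s := by simp
  | succ n ih =>
      rw [tsum_len_succ (n+1)]
      simp only [consEquiv_coe, List.sum_cons]
      have step1 : ∀ j : ℕ, ∑' w : {l : List ℕ // l.length = n + 1}, h (j + w.1.sum)
          = ∑' s : ℕ, ((s + n).choose n) * h (j + s) := fun j => ih (fun m => h (j + m))
      rw [tsum_congr step1, tsum_prod_nat (fun j s => ((s + n).choose n) * h (j + s))]
      refine tsum_congr fun t => ?_
      rw [Finset.Nat.sum_antidiagonal_eq_sum_range_succ (fun j s => ((s + n).choose n : ℝ≥0∞) * h (j + s)) t]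
      have hval : ∀ k ∈ Finset.range (t + 1), ((t - k + n).choose n : ℝ≥0∞) * h (k + (t - k)) = ((t - k + n).choose n : ℝ≥0∞) * h t := by
        intro k hk
        rw [Finset.mem_range] at hk
        rw [Nat.add_sub_cancel' (Nat.lt_succ_iff.mp hk)]
      rw [Finset.sum_congr rfl hval, ← Finset.sum_mul]
      have : ∑ k ∈ Finset.range (t + 1), ((t - k + n).choose n : ℝ≥0∞)
          = ((t + n + 1).choose (n + 1) : ℕ) := by
        have hrefl := Finset.sum_range_reflect (fun k => ((k + n).choose n : ℝ≥0∞)) (t+1)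
        simp only [Nat.add_sub_cancel] at hrefl
        rw [hrefl, ← Nat.cast_sum, hockey n t]
      rw [this]
      rfl




lemma measurable_sum_pi {ι : Type*} [Fintype ι] : Measurable (fun y : ι → ℝ => ∑ i, y i) :=
  Finset.measurable_sum _ (fun i _ => measurable_pi_apply i)

lemma expMeasure_Iio_zero : expMeasure 1 (Set.Iio 0) = 0 := by
  rw [show expMeasure 1 = volume.withDensity (gammaPDF 1 1) from rfl,
    withDensity_apply _ measurableSet_Iio]
  exact lintegral_gammaPDF_of_nonpos le_rfl

instance : IsProbabilityMeasure (expMeasure 1) := isProbabilityMeasure_expMeasure one_pos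

lemma pi_exp_neg (m : ℕ) {z : ℝ} (hz : z < 0) :
    Measure.pi (fun _ : Fin m => expMeasure 1) {y | ∑ i, y i ≤ z} = 0 := by
  refine measure_mono_null (t := ⋃ i : Fin m, Function.eval i ⁻¹' Set.Iio 0)
    (fun y hy => ?_) (measure_iUnion_null fun i : Fin m =>
    Measure.pi_eval_preimage_null (i := i) _ expMeasure_Iio_zero)
  by_contra hmem
  simp only [Set.mem_iUnion, Set.mem_preimage, Set.mem_Iio, not_exists, not_lt,
    Function.eval] at hmem
  have h0 : (0:ℝ) ≤ ∑ i, y i := Finset.sum_nonneg fun i _ => hmem i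
  have hy' : ∑ i, y i ≤ z := hy
  linarith

lemma measurable_c_shift (x : ℝ) (j : ℕ) :
    Measurable fun a : ℝ => ENNReal.ofReal ((x - a) ^ j * Real.exp (-(x - a)) / j.factorial) := by
  fun_prop

open scoped Nat

lemma indicator_integral (x : ℝ) (hx : 0 ≤ x) (j : ℕ) :
    ∫⁻ a, (Set.Icc (0:ℝ) x).indicator
        (fun a => ENNReal.ofReal (Real.exp (-x) * (x - a) ^ j / j.factorial)) a
      = c x (j + 1) := by
  rw [lintegral_indicator measurableSet_Icc]
  have hInt : IntegrableOn (fun a : ℝ => Real.exp (-x) * (x - a) ^ j / j.factorial)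
      (Set.Icc 0 x) := by
    apply Continuous.integrableOn_Icc
    continuity
  have hnn : 0 ≤ᵐ[volume.restrict (Set.Icc 0 x)]
      fun a : ℝ => Real.exp (-x) * (x - a) ^ j / j.factorial := by
    filter_upwards [ae_restrict_mem measurableSet_Icc] with a ha
    have : 0 ≤ x - a := by linarith [(Set.mem_Icc.mp ha).2]
    positivity
  rw [← ofReal_integral_eq_lintegral_ofReal hInt hnn]
  have hreal : ∫ a in Set.Icc (0:ℝ) x, Real.exp (-x) * (x - a) ^ j / j.factorial
      = x ^ (j + 1) * Real.exp (-x) / (j + 1).factorial := by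
    rw [MeasureTheory.integral_Icc_eq_integral_Ioc, ← intervalIntegral.integral_of_le hx]
    have h1 : ∫ a in (0:ℝ)..x, Real.exp (-x) * (x - a) ^ j / j.factorial
        = (Real.exp (-x) / j.factorial) * ∫ a in (0:ℝ)..x, (x - a) ^ j := by
      rw [← intervalIntegral.integral_const_mul]
      refine intervalIntegral.integral_congr fun a _ => by ring
    rw [h1, intervalIntegral.integral_comp_sub_left (fun u => u ^ j) x, sub_self, sub_zero,
      integral_pow]
    rw [Nat.factorial_succ]
    push_cast
    have hj : (j.factorial : ℝ) ≠ 0 := Nat.cast_ne_zero.mpr j.factorial_ne_zero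
    field_simp
    ring
  rw [hreal, c]


/-- key integral recursion -/
lemma exp_integral_tail (m : ℕ) (x : ℝ) (hx : 0 ≤ x) :
    ∫⁻ a, (if 0 ≤ x - a then ∑' k, c (x - a) (m + k) else 0) ∂(expMeasure 1)
      = ∑' k, c x (m + 1 + k) := by
  have hg : Measurable fun a : ℝ => (if 0 ≤ x - a then ∑' k, c (x - a) (m + k) else 0 : ℝ≥0∞) := by
    have h1 : Measurable fun a : ℝ => (∑' k, c (x - a) (m + k) : ℝ≥0∞) :=
      Measurable.ennreal_tsum fun k => measurable_c_shift x (m + k)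
    have : {a : ℝ | 0 ≤ x - a} = Set.Iic x := by ext a; simp [sub_nonneg]
    exact Measurable.ite (this ▸ measurableSet_Iic) h1 measurable_const
  have hpdfmeas : Measurable (gammaPDF 1 1) := (measurable_gammaPDFReal 1 1).ennreal_ofReal
  rw [show expMeasure 1 = volume.withDensity (gammaPDF 1 1) from rfl,
    lintegral_withDensity_eq_lintegral_mul _ hpdfmeas hg]
  have hpt : ∀ a : ℝ, (gammaPDF 1 1 * fun a => (if 0 ≤ x - a then ∑' k, c (x - a) (m + k) else 0)) a
      = ∑' k, (Set.Icc (0:ℝ) x).indicator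
          (fun a => ENNReal.ofReal (Real.exp (-x) * (x - a) ^ (m + k) / (m + k).factorial)) a := by
    intro a
    simp only [Pi.mul_apply]
    by_cases ha : 0 ≤ a
    · by_cases hax : a ≤ x
      · have hxa : 0 ≤ x - a := by linarith
        rw [if_pos hxa]
        have hpdf : gammaPDF 1 1 a = ENNReal.ofReal (Real.exp (-a)) := by
          rw [show gammaPDF 1 1 a = exponentialPDF 1 a from rfl, exponentialPDF_of_nonneg ha]
          norm_num
        rw [hpdf, ENNReal.tsum_mul_left.symm]
        refine tsum_congr fun k => ?_
        rw [Set.indicator_of_mem (Set.mem_Icc.mpr ⟨ha, hax⟩), c, ← ENNReal.ofReal_mul (Real.exp_nonneg _)]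
        congr 1
        have hee : Real.exp (-a) * Real.exp (-(x - a)) = Real.exp (-x) := by
          rw [← Real.exp_add]; ring_nf
        calc Real.exp (-a) * ((x - a) ^ (m + k) * Real.exp (-(x - a)) / (m + k).factorial)
            = Real.exp (-a) * Real.exp (-(x - a)) * (x - a) ^ (m + k) / (m + k).factorial := by ring
          _ = Real.exp (-x) * (x - a) ^ (m + k) / (m + k).factorial := by rw [hee]
      · have hxa : ¬ (0 ≤ x - a) := by linarith
        rw [if_neg hxa, mul_zero]
        symm
        simp only [Set.indicator_of_notMem (fun h => hax (Set.mem_Icc.mp h).2)]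
        exact tsum_zero
    · have hpdf : gammaPDF 1 1 a = 0 := gammaPDF_of_neg (lt_of_not_ge ha)
      rw [hpdf, zero_mul]
      symm
      simp only [Set.indicator_of_notMem (fun h => ha (Set.mem_Icc.mp h).1)]
      exact tsum_zero
  rw [lintegral_congr hpt,
    lintegral_tsum fun k => (Measurable.indicator (by fun_prop :
      Measurable fun a : ℝ => ENNReal.ofReal (Real.exp (-x) * (x - a) ^ (m + k) / (m + k).factorial))
      measurableSet_Icc).aemeasurable]
  refine tsum_congr fun k => ?_
  rw [indicator_integral x hx (m + k)]
  congr 1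
  omega





lemma pi_exp_sum : ∀ (m : ℕ) (x : ℝ),
    Measure.pi (fun _ : Fin m => expMeasure 1) {y | ∑ i, y i ≤ x}
      = if 0 ≤ x then ∑' k, c x (m + k) else 0 := by
  intro m
  induction m with
  | zero =>
      intro x
      by_cases hx : 0 ≤ x
      · have hset : {y : Fin 0 → ℝ | ∑ i, y i ≤ x} = Set.univ := by
          ext y; simp [hx]
        rw [hset, if_pos hx, measure_univ]
        simp only [Nat.zero_add, zero_add]
        exact (c_tsum x hx).symm
      · have hset : {y : Fin 0 → ℝ | ∑ i, y i ≤ x} = ∅ := by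
          ext y; simp [hx]
        rw [hset, if_neg hx, measure_empty]
  | succ m ih =>
      intro x
      by_cases hx : 0 ≤ x
      swap
      · rw [if_neg hx]; exact pi_exp_neg (m+1) (lt_of_not_ge hx)
      rw [if_pos hx]
      have hmeas_t : MeasurableSet {p : ℝ × (Fin m → ℝ) | p.1 + ∑ i, p.2 i ≤ x} := by
        refine measurableSet_le ?_ measurable_const
        exact measurable_fst.add (measurable_sum_pi.comp measurable_snd)
      have hmp := measurePreserving_piFinSuccAbove (fun _ : Fin (m+1) => expMeasure 1) 0
      have hset : {y : Fin (m+1) → ℝ | ∑ i, y i ≤ x}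
          = (MeasurableEquiv.piFinSuccAbove (fun _ : Fin (m+1) => ℝ) 0) ⁻¹'
            {p : ℝ × (Fin m → ℝ) | p.1 + ∑ i, p.2 i ≤ x} := by
        ext y
        simp only [Set.mem_setOf_eq, Set.mem_preimage, MeasurableEquiv.piFinSuccAbove_apply,
          Fin.insertNthEquiv_symm_apply, Fin.removeNth]
        rw [Fin.sum_univ_succAbove y 0]
      rw [hset, hmp.measure_preimage hmeas_t.nullMeasurableSet, Measure.prod_apply hmeas_t]
      have hsec : ∀ a : ℝ, (Prod.mk a ⁻¹' {p : ℝ × (Fin m → ℝ) | p.1 + ∑ i, p.2 i ≤ x})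
          = {y : Fin m → ℝ | ∑ i, y i ≤ x - a} := by
        intro a; ext y
        simp only [Set.mem_preimage, Set.mem_setOf_eq]
        constructor <;> intro h <;> linarith
      calc ∫⁻ a, Measure.pi (fun _ : Fin m => expMeasure 1)
              (Prod.mk a ⁻¹' {p : ℝ × (Fin m → ℝ) | p.1 + ∑ i, p.2 i ≤ x}) ∂(expMeasure 1)
          = ∫⁻ a, (if 0 ≤ x - a then ∑' k, c (x - a) (m + k) else 0) ∂(expMeasure 1) := by
            refine lintegral_congr fun a => ?_
            rw [hsec a, ih (x - a)]
        _ = ∑' k, c x (m + 1 + k) := exp_integral_tail m x hx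

lemma pi_exp_sum_fintype (ι : Type*) [Fintype ι] (x : ℝ) (hx : 0 ≤ x) :
    Measure.pi (fun _ : ι => expMeasure 1) {y | ∑ i, y i ≤ x}
      = ∑' k, c x (Fintype.card ι + k) := by
  set m := Fintype.card ι
  have e : Fin m ≃ ι := (Fintype.equivFin ι).symm
  have hmp := MeasureTheory.measurePreserving_piCongrLeft (α := fun _ : ι => ℝ) (fun _ : ι => expMeasure 1) e
  have hsm : MeasurableSet {y : ι → ℝ | ∑ i, y i ≤ x} :=
    measurableSet_le measurable_sum_pi measurable_const
  have hpre : (MeasurableEquiv.piCongrLeft (fun _ : ι => ℝ) e) ⁻¹'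
      {y : ι → ℝ | ∑ i, y i ≤ x} = {z : Fin m → ℝ | ∑ a, z a ≤ x} := by
    ext z
    simp only [Set.mem_preimage, Set.mem_setOf_eq]
    have : ∑ i, (MeasurableEquiv.piCongrLeft (fun _ : ι => ℝ) e) z i = ∑ a, z a := by
      refine (Fintype.sum_equiv e _ _ fun a => ?_).symm
      exact (MeasurableEquiv.piCongrLeft_apply_apply (β := fun _ : ι => ℝ) e z a).symm
    rw [this]
  rw [← hmp.measure_preimage hsm.nullMeasurableSet, hpre, pi_exp_sum m x, if_pos hx]




/-- The finite set of (vertex, index) pairs of exponential gaps contributing to `S v`. -/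
def pathFinset : List ℕ → Finset (List ℕ × ℕ)
  | [] => ∅
  | j :: w => pathFinset w ∪ ({w} : Finset (List ℕ)) ×ˢ Finset.range (j + 1)

lemma mem_pathFinset_length {v : List ℕ} {p : List ℕ × ℕ} (hp : p ∈ pathFinset v) :
    p.1.length < v.length := by
  induction v with
  | nil => simp [pathFinset] at hp
  | cons j w ih =>
      simp only [pathFinset, Finset.mem_union, Finset.mem_product, Finset.mem_singleton] at hp
      rcases hp with hp | hp
      · exact lt_trans (ih hp) (by simp)
      · simp [hp.1]

lemma pathFinset_disjoint (j : ℕ) (w : List ℕ) :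
    Disjoint (pathFinset w) (({w} : Finset (List ℕ)) ×ˢ Finset.range (j + 1)) := by
  rw [Finset.disjoint_left]
  intro p hp hp2
  simp only [Finset.mem_product, Finset.mem_singleton] at hp2
  have := mem_pathFinset_length hp
  rw [hp2.1] at this
  exact lt_irrefl _ this

lemma pathFinset_card (v : List ℕ) : (pathFinset v).card = v.length + v.sum := by
  induction v with
  | nil => simp [pathFinset]
  | cons j w ih =>
      rw [pathFinset, Finset.card_union_of_disjoint (pathFinset_disjoint j w), ih,
        Finset.card_product, Finset.card_singleton, Finset.card_range]
      simp only [List.length_cons, List.sum_cons]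
      omega

variable {Ω : Type*} [MeasurableSpace Ω]
    (P : Measure Ω) [IsProbabilityMeasure P]
    (E : List ℕ → ℕ → Ω → ℝ)

lemma S_eq
    (S : List ℕ → Ω → ℝ)
    (hS_root : ∀ ω, S [] ω = 0)
    (hS_child : ∀ (v : List ℕ) (j : ℕ) (ω : Ω),
      S (j :: v) ω = S v ω + ∑ i ∈ Finset.range (j + 1), E v i ω) :
    ∀ (v : List ℕ) (ω : Ω), S v ω = ∑ p ∈ pathFinset v, E p.1 p.2 ω := by
  intro v
  induction v with
  | nil => intro ω; simp [pathFinset, hS_root]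
  | cons j w ih =>
      intro ω
      rw [hS_child, ih ω, pathFinset, Finset.sum_union (pathFinset_disjoint j w),
        Finset.sum_product, Finset.sum_singleton]

lemma map_restrict_pi
    (hE_meas : ∀ v i, Measurable (E v i))
    (hE_indep : iIndepFun (fun (p : List ℕ × ℕ) => E p.1 p.2) P)
    (hE_law : ∀ v i, Measure.map (E v i) P = expMeasure 1)
    (T : Finset (List ℕ × ℕ)) :
    Measure.map (fun ω (p : T) => E p.1.1 p.1.2 ω) P
      = Measure.pi (fun _ : T => expMeasure 1) := by
  haveI : IsProbabilityMeasure (expMeasure 1) := isProbabilityMeasure_expMeasure one_pos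
  have hmeas : Measurable (fun ω (p : T) => E p.1.1 p.1.2 ω) :=
    measurable_pi_lambda _ fun p => hE_meas _ _
  refine (Measure.pi_eq (μ := fun _ : T => expMeasure 1) (μ' := Measure.map (fun ω (p : T) => E p.1.1 p.1.2 ω) P) fun s hs => ?_).symm
  classical
  set s' : List ℕ × ℕ → Set ℝ := fun p => if h : p ∈ T then s ⟨p, h⟩ else Set.univ with hs'def
  have hs' : ∀ p, MeasurableSet (s' p) := by
    intro p
    by_cases h : p ∈ T
    · simpa [hs'def, h] using hs ⟨p, h⟩
    · simp [hs'def, h]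
  have hpre : (fun ω (p : T) => E p.1.1 p.1.2 ω) ⁻¹' (Set.univ.pi s)
      = ⋂ p ∈ T, E p.1 p.2 ⁻¹' s' p := by
    ext ω
    simp only [Set.mem_preimage, Set.mem_pi, Set.mem_univ, forall_true_left, Set.mem_iInter]
    constructor
    · intro h p hp
      simpa [hs'def, hp] using h ⟨p, hp⟩
    · intro h p
      have := h p.1 p.2
      simpa [hs'def, p.2] using this
  rw [Measure.map_apply hmeas (MeasurableSet.univ_pi hs), hpre,
    hE_indep.meas_biInter (fun p hp => ⟨s' p, hs' p, rfl⟩)]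
  rw [← Finset.prod_coe_sort T (fun p => P (E p.1 p.2 ⁻¹' s' p))]
  refine Finset.prod_congr rfl fun p _ => ?_
  have h1 : P (E p.1.1 p.1.2 ⁻¹' s' p.1) = (Measure.map (E p.1.1 p.1.2) P) (s' p.1) :=
    (Measure.map_apply (hE_meas _ _) (hs' p.1)).symm
  rw [h1, hE_law]
  congr 1
  simp [hs'def, p.2]



lemma prob_S_le
    (hE_meas : ∀ v i, Measurable (E v i))
    (hE_indep : iIndepFun (fun (p : List ℕ × ℕ) => E p.1 p.2) P)
    (hE_law : ∀ v i, Measure.map (E v i) P = expMeasure 1)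
    (S : List ℕ → Ω → ℝ)
    (hS_root : ∀ ω, S [] ω = 0)
    (hS_child : ∀ (v : List ℕ) (j : ℕ) (ω : Ω),
      S (j :: v) ω = S v ω + ∑ i ∈ Finset.range (j + 1), E v i ω)
    (v : List ℕ) (x : ℝ) (hx : 0 ≤ x) :
    P {ω | S v ω ≤ x} = ∑' k, c x (v.length + v.sum + k) := by
  set T := pathFinset v with hT
  have hSeq := S_eq E S hS_root hS_child v
  have hmeas : Measurable (fun ω (p : T) => E p.1.1 p.1.2 ω) :=
    measurable_pi_lambda _ fun p => hE_meas _ _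
  have hsm : MeasurableSet {y : T → ℝ | ∑ p, y p ≤ x} :=
    measurableSet_le measurable_sum_pi measurable_const
  have hset : {ω | S v ω ≤ x}
      = (fun ω (p : T) => E p.1.1 p.1.2 ω) ⁻¹' {y : T → ℝ | ∑ p, y p ≤ x} := by
    ext ω
    simp only [Set.mem_setOf_eq, Set.mem_preimage, hSeq ω]
    rw [show (∑ p : T, E p.1.1 p.1.2 ω) = ∑ p ∈ T, E p.1 p.2 ω from
      Finset.sum_coe_sort T (fun p => E p.1 p.2 ω)]
  rw [hset, ← Measure.map_apply hmeas hsm,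
    map_restrict_pi P E hE_meas hE_indep hE_law T,
    pi_exp_sum_fintype T x hx]
  rw [show Fintype.card T = v.length + v.sum from by
    rw [Fintype.card_coe, hT, pathFinset_card]]

lemma final_sum (x : ℝ) (hx : 0 ≤ x) (n : ℕ) :
    ∑' s : ℕ, ((s + n).choose n : ℝ≥0∞) * c x (n + s)
      = ENNReal.ofReal (x ^ n / n.factorial) := by
  have hterm : ∀ s : ℕ, ((s + n).choose n : ℝ≥0∞) * c x (n + s)
      = ENNReal.ofReal (x ^ n / n.factorial) * c x s := by
    intro s
    rw [c, c, ← ENNReal.ofReal_natCast, ← ENNReal.ofReal_mul (by positivity),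
      ← ENNReal.ofReal_mul (by positivity)]
    congr 1
    have hfac : ((s + n).choose n : ℝ) * n.factorial * s.factorial = (s + n).factorial := by
      exact_mod_cast congrArg (Nat.cast : ℕ → ℝ)
        (by simpa using Nat.choose_mul_factorial_mul_factorial (Nat.le_add_left n s))
    have h1 : ((s + n).factorial : ℝ) ≠ 0 := Nat.cast_ne_zero.mpr (Nat.factorial_ne_zero _)
    have h2 : (n.factorial : ℝ) ≠ 0 := Nat.cast_ne_zero.mpr (Nat.factorial_ne_zero _)
    have h3 : (s.factorial : ℝ) ≠ 0 := Nat.cast_ne_zero.mpr (Nat.factorial_ne_zero _)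
    rw [pow_add, show n + s = s + n from by omega]
    field_simp
    linear_combination (x ^ n * x ^ s) * hfac
  rw [tsum_congr hterm, ENNReal.tsum_mul_left, c_tsum x hx, mul_one]

end PWITAux


/-- For the PWIT (the branching random walk on the Ulam–Harris tree in which
the root has value `0` and the values at the children of `v` are
`S(v) + Y₁ < S(v) + Y₂ < ⋯` with the `Yⱼ` the points of an independent rate-1
Poisson process on `(0,∞)`, equivalently `Yⱼ` a sum of `j` i.i.d. mean-1
exponentials), the expected number `G_n(x)` of depth-`n` vertices with value
at most `x` equals `xⁿ/n!` for all `x ≥ 0` and `n ≥ 1`.  Here a child of `v`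
is `j :: v` and `E v i` are the i.i.d. exponential gaps at `v`. -/
theorem pwit_expected_count {Ω : Type*} [MeasurableSpace Ω]
    (P : Measure Ω) [IsProbabilityMeasure P]
    (E : List ℕ → ℕ → Ω → ℝ)
    (hE_meas : ∀ v i, Measurable (E v i))
    (hE_indep : iIndepFun (fun (p : List ℕ × ℕ) => E p.1 p.2) P)
    (hE_law : ∀ v i, Measure.map (E v i) P = expMeasure 1)
    (S : List ℕ → Ω → ℝ)
    (hS_root : ∀ ω, S [] ω = 0)
    (hS_child : ∀ (v : List ℕ) (j : ℕ) (ω : Ω),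
      S (j :: v) ω = S v ω + ∑ i ∈ Finset.range (j + 1), E v i ω) :
    ∀ (x : ℝ), 0 ≤ x → ∀ (n : ℕ), 1 ≤ n →
      ∫⁻ ω, ∑' v : {l : List ℕ // l.length = n},
          (if S v.1 ω ≤ x then (1 : ℝ≥0∞) else 0) ∂P =
        ENNReal.ofReal (x ^ n / n.factorial) := by
  intro x hx n _hn
  classical
  have hSmeas : ∀ v : List ℕ, Measurable (S v) := fun v => by
    have h : S v = fun ω => ∑ p ∈ PWITAux.pathFinset v, E p.1 p.2 ω :=
      funext (PWITAux.S_eq E S hS_root hS_child v)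
    rw [h]
    exact Finset.measurable_sum _ fun p _ => hE_meas _ _
  have hmeasset : ∀ v : List ℕ, MeasurableSet {ω | S v ω ≤ x} := fun v =>
    measurableSet_le (hSmeas v) measurable_const
  have hindic : ∀ (v : List ℕ) (ω : Ω), (if S v ω ≤ x then (1:ℝ≥0∞) else 0)
      = {ω | S v ω ≤ x}.indicator (fun _ => 1) ω := by
    intro v ω
    by_cases h : S v ω ≤ x <;> simp [Set.indicator, h]
  calc ∫⁻ ω, ∑' v : {l : List ℕ // l.length = n}, (if S v.1 ω ≤ x then (1:ℝ≥0∞) else 0) ∂P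
      = ∫⁻ ω, ∑' v : {l : List ℕ // l.length = n},
          {ω | S v.1 ω ≤ x}.indicator (fun _ => 1) ω ∂P :=
        lintegral_congr fun ω => tsum_congr fun v => hindic v.1 ω
    _ = ∑' v : {l : List ℕ // l.length = n},
          ∫⁻ ω, {ω | S v.1 ω ≤ x}.indicator (fun _ => 1) ω ∂P :=
        lintegral_tsum fun v => ((measurable_one.indicator (hmeasset v.1)).aemeasurable)
    _ = ∑' v : {l : List ℕ // l.length = n}, P {ω | S v.1 ω ≤ x} := by
        refine tsum_congr fun v => ?_
        rw [lintegral_indicator (hmeasset v.1), setLIntegral_one]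
    _ = ∑' v : {l : List ℕ // l.length = n}, ∑' k, PWITAux.c x (n + (v.1.sum + k)) := by
        refine tsum_congr fun v => ?_
        rw [PWITAux.prob_S_le P E hE_meas hE_indep hE_law S hS_root hS_child v.1 x hx, v.2]
        exact tsum_congr fun k => by rw [add_assoc]
    _ = ∑' w : {l : List ℕ // l.length = n + 1}, PWITAux.c x (n + w.1.sum) := by
        rw [PWITAux.tsum_len_succ n (fun w => PWITAux.c x (n + w.1.sum))]
        simp only [PWITAux.consEquiv_coe, List.sum_cons]
        rw [ENNReal.tsum_comm (f := fun (v : {l : List ℕ // l.length = n}) (k : ℕ) =>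
          PWITAux.c x (n + (v.1.sum + k)))]
        exact tsum_congr fun k => tsum_congr fun v =>
          congrArg (PWITAux.c x) (by omega)
    _ = ∑' s : ℕ, ((s + n).choose n : ℝ≥0∞) * PWITAux.c x (n + s) :=
        PWITAux.tsum_list (fun s => PWITAux.c x (n + s)) n
    _ = ENNReal.ofReal (x ^ n / n.factorial) := PWITAux.final_sum x hx n
end

section
/- If E[Σ_{|v|=n} τ(v)^{-a}] = (dρ/a)^n with dρ/a < 1, and diam(∂T(v)) = τ(v)^{-1}·D_v with D_v independent of τ(v) and distributed as diam(∂T), and E[diam(∂T)^a] < ∞, then E[Σ_{|v|=n} diam(∂T(v))^a] = (dρ/a)^n E[diam(∂T)^a] → 0 as n → ∞, hence the a-dimensional Hausdorff content of ∂T is zero almost surely. -/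
open MeasureTheory ProbabilityTheory Filter
open scoped ENNReal

/-- Upper bound on Hausdorff content via covers at depth `n`.  Suppose
`E[Σ_{|v|=n} τ(v)^{-a}] = (dρ/a)^n` with `dρ/a < 1`, and the diameter of the
set of rays through a depth-`n` vertex `v` factors as
`diam(∂T(v)) = τ(v)^{-1} D_v` with `D_v` independent of `τ(v)` and distributed
as `D_root = diam(∂T)`, which has `E[diam(∂T)^a] < ∞`.  Then
`E[Σ_{|v|=n} diam(∂T(v))^a] = (dρ/a)^n E[diam(∂T)^a] → 0`; hence, since the
covers `{∂T(v) : |v|=n}` witness `H_a(∂T) ≤ Σ_{|v|=n} diam(∂T(v))^a`, the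
`a`-dimensional Hausdorff content `H_a(∂T)` is zero almost surely. -/
theorem hausdorff_content_zero {Ω : Type*} [MeasurableSpace Ω]
    (P : Measure Ω) [IsProbabilityMeasure P]
    (a d ρ : ℝ) (ha : 0 < a) (hd : 0 < d) (hρ : 0 < ρ)
    (hratio : d * ρ / a < 1)
    (τ D : List ℕ → Ω → ℝ)
    (hτ_meas : ∀ v, Measurable (τ v)) (hD_meas : ∀ v, Measurable (D v))
    (hτ_one : ∀ v ω, 1 ≤ τ v ω) (hD_nonneg : ∀ v ω, 0 ≤ D v ω)
    (hτ_root : ∀ ω, τ [] ω = 1)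
    (hmom : ∀ n : ℕ,
      ∫⁻ ω, ∑' v : {l : List ℕ // l.length = n},
          ENNReal.ofReal ((τ v.1 ω) ^ (-a)) ∂P =
        ENNReal.ofReal ((d * ρ / a) ^ n))
    (hindep : ∀ v : List ℕ, IndepFun (τ v) (D v) P)
    (hlaw : ∀ v : List ℕ, Measure.map (D v) P = Measure.map (D []) P)
    (hDa_fin : ∫⁻ ω, ENNReal.ofReal (D [] ω ^ a) ∂P < ⊤)
    (H : Ω → ℝ≥0∞)
    (hcover : ∀ (n : ℕ) (ω : Ω),
      H ω ≤ ∑' v : {l : List ℕ // l.length = n},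
        ENNReal.ofReal (((τ v.1 ω)⁻¹ * D v.1 ω) ^ a)) :
    (∀ n : ℕ,
      ∫⁻ ω, ∑' v : {l : List ℕ // l.length = n},
          ENNReal.ofReal (((τ v.1 ω)⁻¹ * D v.1 ω) ^ a) ∂P =
        ENNReal.ofReal ((d * ρ / a) ^ n) *
          ∫⁻ ω, ENNReal.ofReal (D [] ω ^ a) ∂P) ∧
    Tendsto (fun n : ℕ =>
      ∫⁻ ω, ∑' v : {l : List ℕ // l.length = n},
          ENNReal.ofReal (((τ v.1 ω)⁻¹ * D v.1 ω) ^ a) ∂P)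
      atTop (nhds 0) ∧
    (∀ᵐ ω ∂P, H ω = 0) := by
  set C := ∫⁻ ω, ENNReal.ofReal (D [] ω ^ a) ∂P with hC
  -- measurability helpers
  have hτa_meas : ∀ v : List ℕ, Measurable fun ω => ENNReal.ofReal ((τ v ω) ^ (-a)) := by
    intro v; have := hτ_meas v; fun_prop
  have hDa_meas : ∀ v : List ℕ, Measurable fun ω => ENNReal.ofReal ((D v ω) ^ a) := by
    intro v; have := hD_meas v; fun_prop
  have hterm_meas : ∀ v : List ℕ,
      Measurable fun ω => ENNReal.ofReal (((τ v ω)⁻¹ * D v ω) ^ a) := by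
    intro v; have := hτ_meas v; have := hD_meas v; fun_prop
  -- pointwise factorization
  have hfact : ∀ (v : List ℕ) (ω : Ω),
      ENNReal.ofReal (((τ v ω)⁻¹ * D v ω) ^ a)
        = ENNReal.ofReal ((τ v ω) ^ (-a)) * ENNReal.ofReal ((D v ω) ^ a) := by
    intro v ω
    have ht : (0:ℝ) < τ v ω := lt_of_lt_of_le one_pos (hτ_one v ω)
    rw [Real.mul_rpow (inv_nonneg.mpr ht.le) (hD_nonneg v ω),
      Real.inv_rpow ht.le, ← Real.rpow_neg ht.le,
      ENNReal.ofReal_mul (Real.rpow_nonneg ht.le _)]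
  -- law: each D v has same a-th moment as D []
  have hDmom : ∀ v : List ℕ,
      ∫⁻ ω, ENNReal.ofReal ((D v ω) ^ a) ∂P = C := by
    intro v
    have hψ : Measurable fun x : ℝ => ENNReal.ofReal (x ^ a) := by fun_prop
    calc ∫⁻ ω, ENNReal.ofReal ((D v ω) ^ a) ∂P
        = ∫⁻ x, ENNReal.ofReal (x ^ a) ∂(Measure.map (D v) P) :=
          (lintegral_map hψ (hD_meas v)).symm
      _ = ∫⁻ x, ENNReal.ofReal (x ^ a) ∂(Measure.map (D []) P) := by rw [hlaw v]
      _ = C := lintegral_map hψ (hD_meas [])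
  -- independence of transformed variables
  have hind : ∀ v : List ℕ,
      ∫⁻ ω, ENNReal.ofReal ((τ v ω) ^ (-a)) * ENNReal.ofReal ((D v ω) ^ a) ∂P
        = (∫⁻ ω, ENNReal.ofReal ((τ v ω) ^ (-a)) ∂P) * C := by
    intro v
    have hφ : Measurable fun x : ℝ => ENNReal.ofReal (x ^ (-a)) := by fun_prop
    have hψ : Measurable fun x : ℝ => ENNReal.ofReal (x ^ a) := by fun_prop
    have hi : IndepFun (fun ω => ENNReal.ofReal ((τ v ω) ^ (-a)))
        (fun ω => ENNReal.ofReal ((D v ω) ^ a)) P := (hindep v).comp hφ hψ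
    rw [lintegral_mul_eq_lintegral_mul_lintegral_of_indepFun'' (hτa_meas v).aemeasurable
      (hDa_meas v).aemeasurable hi, hDmom v]
  -- main identity
  have key : ∀ n : ℕ,
      ∫⁻ ω, ∑' v : {l : List ℕ // l.length = n},
          ENNReal.ofReal (((τ v.1 ω)⁻¹ * D v.1 ω) ^ a) ∂P =
        ENNReal.ofReal ((d * ρ / a) ^ n) * C := by
    intro n
    calc ∫⁻ ω, ∑' v : {l : List ℕ // l.length = n},
          ENNReal.ofReal (((τ v.1 ω)⁻¹ * D v.1 ω) ^ a) ∂P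
        = ∑' v : {l : List ℕ // l.length = n},
            ∫⁻ ω, ENNReal.ofReal (((τ v.1 ω)⁻¹ * D v.1 ω) ^ a) ∂P :=
          lintegral_tsum fun v => (hterm_meas v.1).aemeasurable
      _ = ∑' v : {l : List ℕ // l.length = n},
            (∫⁻ ω, ENNReal.ofReal ((τ v.1 ω) ^ (-a)) ∂P) * C := by
          refine tsum_congr fun v => ?_
          simp_rw [hfact v.1]
          exact hind v.1
      _ = (∑' v : {l : List ℕ // l.length = n},
            ∫⁻ ω, ENNReal.ofReal ((τ v.1 ω) ^ (-a)) ∂P) * C := ENNReal.tsum_mul_right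
      _ = (∫⁻ ω, ∑' v : {l : List ℕ // l.length = n},
            ENNReal.ofReal ((τ v.1 ω) ^ (-a)) ∂P) * C :=
          congrArg (· * C) (lintegral_tsum fun v : {l : List ℕ // l.length = n} =>
            (hτa_meas v.1).aemeasurable).symm
      _ = ENNReal.ofReal ((d * ρ / a) ^ n) * C := by rw [hmom n]
  refine ⟨key, ?_, ?_⟩
  · -- tendsto 0
    have hlim : Tendsto (fun n : ℕ => ENNReal.ofReal ((d * ρ / a) ^ n) * C) atTop (nhds 0) := by
      have h1 : Tendsto (fun n : ℕ => ENNReal.ofReal ((d * ρ / a) ^ n)) atTop (nhds 0) := by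
        simp_rw [ENNReal.ofReal_pow (by positivity : (0:ℝ) ≤ d * ρ / a)]
        exact ENNReal.tendsto_pow_atTop_nhds_zero_of_lt_one
          (by simpa [ENNReal.ofReal_lt_one] using hratio)
      simpa using ENNReal.Tendsto.mul_const h1 (Or.inr hDa_fin.ne)
    exact hlim.congr fun n => (key n).symm
  · -- a.e. H = 0
    set L : ℕ → Ω → ℝ≥0∞ := fun n ω => ∑' v : {l : List ℕ // l.length = n},
      ENNReal.ofReal (((τ v.1 ω)⁻¹ * D v.1 ω) ^ a) with hL
    have hLmeas : ∀ n, Measurable (L n) :=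
      fun n => Measurable.ennreal_tsum fun v => hterm_meas v.1
    have hliminf : ∫⁻ ω, Filter.liminf (fun n => L n ω) atTop ∂P = 0 := by
      refine le_antisymm ?_ zero_le
      calc ∫⁻ ω, Filter.liminf (fun n => L n ω) atTop ∂P
          ≤ Filter.liminf (fun n => ∫⁻ ω, L n ω ∂P) atTop := lintegral_liminf_le hLmeas
        _ = 0 := by
            have : Tendsto (fun n => ∫⁻ ω, L n ω ∂P) atTop (nhds 0) := by
              have hlim : Tendsto (fun n : ℕ =>
                  ENNReal.ofReal ((d * ρ / a) ^ n) * C) atTop (nhds 0) := by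
                have h1 : Tendsto (fun n : ℕ =>
                    ENNReal.ofReal ((d * ρ / a) ^ n)) atTop (nhds 0) := by
                  simp_rw [ENNReal.ofReal_pow (by positivity : (0:ℝ) ≤ d * ρ / a)]
                  exact ENNReal.tendsto_pow_atTop_nhds_zero_of_lt_one
                    (by simpa [ENNReal.ofReal_lt_one] using hratio)
                simpa using ENNReal.Tendsto.mul_const h1 (Or.inr hDa_fin.ne)
              exact hlim.congr fun n => (key n).symm
            exact this.liminf_eq
    have hzero : ∀ᵐ ω ∂P, Filter.liminf (fun n => L n ω) atTop = 0 :=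
      (lintegral_eq_zero_iff (Measurable.liminf hLmeas)).mp hliminf
    filter_upwards [hzero] with ω hω
    have : H ω ≤ Filter.liminf (fun n => L n ω) atTop :=
      le_liminf_of_le (by isBoundedDefault) (Filter.Eventually.of_forall fun n => hcover n ω)
    simpa [hω] using this
end
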